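/- Let G be a second-countable locally compact Hausdorff group and let (α,𝔲): G ↷ A and (β,𝔳): G ↷ B be twisted actions on separable unital C*-algebras. Suppose (φ,u): (A,α,𝔲) → (B,β,𝔳) and (ψ,v): (B,β,𝔳) → (A,α,𝔲) are cocycle morphisms such that (id_A, 1) ⪅ᵤ (ψ,v)∘(φ,u) and (id_B, 1) ⪅ᵤ (φ,u)∘(ψ,v). Then there exist cocycle conjugacies (Φ,U): (A,α,𝔲) → (B,β,𝔳) and (Ψ,V): (B,β,𝔳) → (A,α,𝔲) which are mutually inverse (i.e., Ψ = Φ⁻¹ and V_g = Φ⁻¹(U_g)* for all g ∈ G) and satisfy (Φ,U) ⪅ᵤ (φ,u) and (Ψ,V) ⪅ᵤ (ψ,v). -/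

import Mathlib

/-!
Common definitions: twisted actions of a locally compact group on a unital C*-algebra,
cocycle morphisms between them, and (approximate/asymptotic) unitary equivalence.
-/

noncomputable section

/-- `φ⁺(w) = φ(w) + 1 - φ(1)` for a (not necessarily unital) *-homomorphism between unital
C*-algebras. -/
def plusMap {A B : Type*} [CStarAlgebra A] [CStarAlgebra B] (φ : A →⋆ₙₐ[ℂ] B) (w : A) : B :=
  φ w + 1 - φ 1

/-- A twisted action `(α, 𝔲) : G ↷ A` of a topological group on a unital C*-algebra:
a point-norm continuous map `α : G → Aut(A)` and a norm-continuous map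
`𝔲 : G × G → U(A)` satisfying the twisted action identities. -/
structure TwistedAction (G A : Type*) [Group G] [TopologicalSpace G] [CStarAlgebra A] where
  α : G → (A ≃⋆ₐ[ℂ] A)
  α_cont : ∀ a : A, Continuous fun g => α g a
  u : G → G → A
  u_mem : ∀ s t, u s t ∈ unitary A
  u_cont : Continuous fun p : G × G => u p.1 p.2
  α_one : ∀ a : A, α 1 a = a
  α_mul : ∀ s t : G, ∀ a : A, α s (α t a) = u s t * α (s * t) a * star (u s t)
  u_one_left : ∀ s, u 1 s = 1
  u_one_right : ∀ s, u s 1 = 1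
  u_cocycle : ∀ r s t : G, α r (u s t) * u r (s * t) = u r s * u (r * s) t

/-- A cocycle morphism `(φ, u) : (A, α, 𝔲) → (B, β, 𝔳)` between twisted actions on unital
C*-algebras: a *-homomorphism together with a norm-continuous map `u : G → U(B)` satisfying
the equivariance condition and the cocycle identity. -/
structure CocycleMorphism {G A B : Type*} [Group G] [TopologicalSpace G]
    [CStarAlgebra A] [CStarAlgebra B]
    (Sa : TwistedAction G A) (Sb : TwistedAction G B) where
  φ : A →⋆ₙₐ[ℂ] B
  u : G → B
  u_mem : ∀ g, u g ∈ unitary B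
  u_cont : Continuous u
  equivariance : ∀ (g : G) (a : A), u g * Sb.α g (φ a) * star (u g) = φ (Sa.α g a)
  cocycle : ∀ g h : G,
    plusMap φ (Sa.u g h) = u g * Sb.α g (u h) * Sb.u g h * star (u (g * h))

/-- `(ψ, v) ⪅ᵤ (φ, u)` : the pair `(ψ, v)` is approximately unitarily dominated by `(φ, u)`,
i.e. for every `ε > 0`, finite `F ⊆ A` and compact `K ⊆ G` there is a unitary `w ∈ U(B)` with
`‖ψ(a) - w φ(a) w*‖ ≤ ε` on `F` and `‖v_g - w u_g β_g(w)*‖ ≤ ε` on `K`. -/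
def ApproxUDom {G A B : Type*} [Group G] [TopologicalSpace G]
    [CStarAlgebra A] [CStarAlgebra B] (Sb : TwistedAction G B)
    (ψ : A → B) (v : G → B) (φ : A → B) (u : G → B) : Prop :=
  ∀ ε > (0 : ℝ), ∀ F : Finset A, ∀ K : Set G, IsCompact K →
    ∃ w ∈ unitary B,
      (∀ a ∈ F, ‖ψ a - w * φ a * star w‖ ≤ ε) ∧
      (∀ g ∈ K, ‖v g - w * u g * star (Sb.α g w)‖ ≤ ε)

/-- `(φ, u) ≈ₐᵤ (ψ, v)` : asymptotic unitary equivalence of pairs, witnessed by a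
norm-continuous path of unitaries `w : [0,∞) → U(B)` with
`lim_t ‖ψ(a) - w_t φ(a) w_t*‖ = 0` and `lim_t max_{g ∈ K} ‖v_g - w_t u_g β_g(w_t)*‖ = 0`. -/
def AsympUEquiv {G A B : Type*} [Group G] [TopologicalSpace G]
    [CStarAlgebra A] [CStarAlgebra B] (Sb : TwistedAction G B)
    (φ : A → B) (u : G → B) (ψ : A → B) (v : G → B) : Prop :=
  ∃ w : ℝ → B, Continuous w ∧ (∀ t, w t ∈ unitary B) ∧
    (∀ a : A,
      Filter.Tendsto (fun t => ‖ψ a - w t * φ a * star (w t)‖) Filter.atTop (nhds 0)) ∧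
    (∀ K : Set G, IsCompact K → ∀ ε > (0 : ℝ), ∀ᶠ t in Filter.atTop,
      ∀ g ∈ K, ‖v g - w t * u g * star (Sb.α g (w t))‖ ≤ ε)

end

/-!
Elliott's two-sided approximate intertwining, run with cocycle morphisms. Perturbing `Q` and `P`
alternately by unitaries, we make `Qₙ₊₁ ∘ Pₙ` and `Pₙ₊₁ ∘ Qₙ₊₁` `2⁻ⁿ`-close to `(id, 1)` on
larger and larger compact subsets of `A`, `B` and `G`. Reading `Pₙ₊₁ ≈ Pₙ₊₁ ∘ Qₙ₊₁ ∘ Pₙ ≈ Pₙ`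
(and likewise for `Q`) shows that the maps converge pointwise and the cocycles converge uniformly on
compact sets. The limits are cocycle morphisms that are inverse to each other, and each is a limit
of unitary perturbations of `P`, resp. `Q`.
-/

noncomputable section

open Filter Topology Set
open scoped CStarAlgebra

section Metric

variable {α : Type*} [PseudoMetricSpace α] {u : ℕ → α} {C : ℝ} {m : ℕ}

lemma cauchySeq_of_le_geometric_two_of_ge (h : ∀ n ≥ m, dist (u n) (u (n + 1)) ≤ C / 2 ^ n) :
    CauchySeq u := by
  refine (cauchySeq_shift m).1 (cauchySeq_of_le_geometric_two (C := 2 * C / 2 ^ m) fun n => ?_)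
  convert h (n + m) (Nat.le_add_left m n) using 1
  · rw [Nat.add_right_comm]
  · rw [pow_add]
    ring

lemma dist_le_of_le_geometric_two_of_ge (h : ∀ n ≥ m, dist (u n) (u (n + 1)) ≤ C / 2 ^ n)
    {a : α} (ha : Tendsto u atTop (𝓝 a)) {n : ℕ} (hn : m ≤ n) : dist (u n) a ≤ 2 * C / 2 ^ n := by
  have := dist_le_of_le_geometric_two_of_tendsto₀ (f := fun k => u (k + n)) (C := 2 * C / 2 ^ n)
    (fun k => ?_) (ha.comp (tendsto_add_atTop_nat n))
  · simpa using this
  convert h (k + n) (hn.trans (Nat.le_add_left n k)) using 1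
  · rw [Nat.add_right_comm]
  · rw [pow_add]
    ring

end Metric

lemma CompactExhaustion.exists_tendstoUniformlyOn_of_dist_succ_le {X α : Type*}
    [TopologicalSpace X] [PseudoMetricSpace α] [CompleteSpace α] (K : CompactExhaustion X)
    {f : ℕ → X → α} {C : ℝ} (h : ∀ n, ∀ x ∈ K n, dist (f n x) (f (n + 1) x) ≤ C / 2 ^ n) :
    ∃ U : X → α, ∀ m, TendstoUniformlyOn f U atTop (K m) := by
  have hstep : ∀ m, ∀ x ∈ K m, ∀ n ≥ m, dist (f n x) (f (n + 1) x) ≤ C / 2 ^ n :=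
    fun m x hx n hn => h n x (K.subset hn hx)
  choose U hU using fun x =>
    let ⟨m, hm⟩ := K.exists_mem x
    cauchySeq_tendsto_of_complete (cauchySeq_of_le_geometric_two_of_ge (hstep m x hm))
  have hsmall : ∀ ε > 0, ∀ᶠ n in atTop, 2 * C / 2 ^ n < ε := fun ε hε =>
    (tendsto_const_nhds.div_atTop (tendsto_pow_atTop_atTop_of_one_lt one_lt_two)).eventually
      (gt_mem_nhds hε)
  refine ⟨U, fun m => Metric.tendstoUniformlyOn_iff.2 fun ε hε => ?_⟩
  filter_upwards [hsmall ε hε, eventually_ge_atTop m] with n hn hmn x hx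
  rw [dist_comm]
  exact (dist_le_of_le_geometric_two_of_ge (hstep m x hx) (hU x) hmn).trans_lt hn

lemma eq_of_tendsto_of_norm_sub_le {ι E : Type*} [NormedAddCommGroup E]
    {l : Filter ι} [l.NeBot] {f : ι → E} {x y : E} {ε : ι → ℝ}
    (hf : Tendsto f l (𝓝 x)) (hε : Tendsto ε l (𝓝 0)) (h : ∀ᶠ i in l, ‖y - f i‖ ≤ ε i) : y = x := by
  refine tendsto_nhds_unique (tendsto_iff_norm_sub_tendsto_zero.2 ?_) hf
  exact squeeze_zero' (Eventually.of_forall fun _ => norm_nonneg _)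
    (h.mono fun i hi => by rwa [norm_sub_rev]) hε

lemma exists_seq_forall_rel_succ {α : Type*} (x₀ : α) {R : ℕ → α → α → Prop}
    (h : ∀ n x, ∃ y, R n x y) : ∃ f : ℕ → α, ∀ n, R n (f n) (f (n + 1)) := by
  choose next hnext using h
  exact ⟨fun n => Nat.rec x₀ next n, fun n => hnext n _⟩

section CStarAlgebra

variable {ι A B : Type*} [CStarAlgebra A] [CStarAlgebra B]

lemma Unitary.star_mul_cancel_left_of_mem {v : A} (hv : v ∈ unitary A) (x : A) :
    star v * (v * x) = x := by
  rw [← mul_assoc, Unitary.star_mul_self_of_mem hv, one_mul]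

lemma norm_sub_star_eq_norm_one_sub_mul {v : A} (hv : v ∈ unitary A) (x : A) :
    ‖x - star v‖ = ‖1 - v * x‖ := by
  rw [← CStarRing.norm_mem_unitary_mul _ hv, mul_sub, Unitary.mul_star_self_of_mem hv,
    norm_sub_rev]

lemma NonUnitalStarAlgHom.norm_apply_sub_apply_le (φ : A →⋆ₙₐ[ℂ] B) (x y : A) :
    ‖φ x - φ y‖ ≤ ‖x - y‖ := by
  rw [← map_sub]
  exact NonUnitalStarAlgHom.norm_apply_le φ _

lemma cauchySeq_apply_of_denseRange {f : ℕ → A →⋆ₙₐ[ℂ] B} {s : ℕ → A} (hs : DenseRange s)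
    (h : ∀ i, CauchySeq fun n => f n (s i)) (a : A) : CauchySeq fun n => f n a := by
  refine Metric.cauchySeq_iff'.2 fun ε hε => ?_
  obtain ⟨_, ⟨i, rfl⟩, hai⟩ := Metric.mem_closure_iff.1 (hs a) (ε / 3) (by positivity)
  obtain ⟨N, hN⟩ := Metric.cauchySeq_iff'.1 (h i) (ε / 3) (by positivity)
  refine ⟨N, fun n hn => ?_⟩
  rw [dist_eq_norm] at hai ⊢
  have hNn := hN n hn
  rw [dist_eq_norm] at hNn
  calc ‖f n a - f N a‖ ≤ ‖f n a - f n (s i)‖ + (‖f n (s i) - f N (s i)‖ + ‖f N (s i) - f N a‖) :=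
        (norm_sub_le_norm_sub_add_norm_sub _ _ _).trans
          (add_le_add_right (norm_sub_le_norm_sub_add_norm_sub _ _ _) _)
    _ < ε / 3 + (ε / 3 + ε / 3) := by
        gcongr
        · exact ((f n).norm_apply_sub_apply_le a (s i)).trans_lt hai
        · exact ((f N).norm_apply_sub_apply_le (s i) a).trans_lt (by rwa [norm_sub_rev])
    _ = ε := by ring

lemma tendsto_apply_apply {l : Filter ι} {f : ι → A →⋆ₙₐ[ℂ] B} {x : ι → A} {a : A} {b : B}
    (hf : Tendsto (fun i => f i a) l (𝓝 b)) (hx : Tendsto x l (𝓝 a)) :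
    Tendsto (fun i => f i (x i)) l (𝓝 b) := by
  rw [tendsto_iff_norm_sub_tendsto_zero] at hf hx ⊢
  refine squeeze_zero (fun _ => norm_nonneg _) (fun i => ?_) (by simpa using hx.add hf)
  exact (norm_sub_le_norm_sub_add_norm_sub _ (f i a) _).trans
    (add_le_add_left (NonUnitalStarAlgHom.norm_apply_sub_apply_le _ _ _) _)

end CStarAlgebra

section PlusMap

variable {A B : Type*} [CStarAlgebra A] [CStarAlgebra B] (φ : A →⋆ₙₐ[ℂ] B)

@[simp]
lemma plusMap_one : plusMap φ 1 = 1 := by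
  simp [plusMap]

lemma plusMap_mul (x y : A) : plusMap φ (x * y) = plusMap φ x * plusMap φ y := by
  simp only [plusMap, sub_mul, mul_sub, add_mul, mul_add, mul_one, one_mul, ← map_mul]
  abel

lemma plusMap_star (x : A) : plusMap φ (star x) = star (plusMap φ x) := by
  simp [plusMap, ← map_star]

lemma plusMap_mem_unitary {x : A} (hx : x ∈ unitary A) : plusMap φ x ∈ unitary B := by
  refine ⟨?_, ?_⟩ <;>
    simp [← plusMap_star, ← plusMap_mul, Unitary.star_mul_self_of_mem hx,
      Unitary.mul_star_self_of_mem hx]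

lemma plusMap_mul_apply (x y : A) : plusMap φ x * φ y = φ (x * y) := by
  simp only [plusMap, sub_mul, add_mul, one_mul, ← map_mul]
  abel

lemma apply_mul_plusMap (x y : A) : φ y * plusMap φ x = φ (y * x) := by
  simp only [plusMap, mul_sub, mul_add, mul_one, ← map_mul]
  abel

lemma plusMap_sub_plusMap (x y : A) : plusMap φ x - plusMap φ y = φ x - φ y := by
  simp only [plusMap]
  abel

lemma norm_plusMap_sub_plusMap_le (x y : A) : ‖plusMap φ x - plusMap φ y‖ ≤ ‖x - y‖ := by
  rw [plusMap_sub_plusMap]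
  exact φ.norm_apply_sub_apply_le x y

lemma plusMap_plusMap_sub (ψ : B →⋆ₙₐ[ℂ] A) (y : A) :
    plusMap ψ (plusMap φ y) - y = (1 - ψ (φ 1)) - (y - ψ (φ y)) := by
  simp only [plusMap, map_sub, map_add]
  abel

lemma plusMap_of_map_one (h : φ 1 = 1) (x : A) : plusMap φ x = φ x := by
  simp [plusMap, h]

lemma plusMap_conj (w : unitary B) (x : A) :
    plusMap ((Unitary.conjStarAlgAut ℂ B w : B →⋆ₙₐ[ℂ] B).comp φ) x
      = w * plusMap φ x * star (w : B) := by
  simp [plusMap, mul_add, mul_sub, add_mul, sub_mul]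

def plusMapUnitary (w : unitary A) : unitary B :=
  ⟨plusMap φ w, plusMap_mem_unitary φ w.2⟩

end PlusMap

namespace CocycleMorphism

variable {G A B C : Type*} [Group G] [TopologicalSpace G]
  [CStarAlgebra A] [CStarAlgebra B] [CStarAlgebra C]
  {Sa : TwistedAction G A} {Sb : TwistedAction G B} {Sc : TwistedAction G C}

@[ext]
lemma ext {M N : CocycleMorphism Sa Sb} (hφ : M.φ = N.φ) (hu : M.u = N.u) : M = N := by
  cases M; cases N; cases hφ; cases hu; rfl

lemma plusMap_equivariance (M : CocycleMorphism Sa Sb) (g : G) (x : A) :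
    plusMap M.φ (Sa.α g x) = M.u g * Sb.α g (plusMap M.φ x) * star (M.u g) := by
  simp only [plusMap, map_add, map_sub, map_one, mul_add, add_mul, mul_sub, sub_mul, mul_one,
    M.equivariance, Unitary.mul_star_self_of_mem (M.u_mem g)]

variable (Sa) in
protected def id : CocycleMorphism Sa Sa where
  φ := NonUnitalStarAlgHom.id ℂ A
  u _ := 1
  u_mem _ := one_mem _
  u_cont := continuous_const
  equivariance g a := by simp
  cocycle g h := by simp [plusMap]

def comp (N : CocycleMorphism Sb Sc) (M : CocycleMorphism Sa Sb) : CocycleMorphism Sa Sc where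
  φ := N.φ.comp M.φ
  u g := plusMap N.φ (M.u g) * N.u g
  u_mem g := mul_mem (plusMap_mem_unitary N.φ (M.u_mem g)) (N.u_mem g)
  u_cont := by
    have : Continuous fun b => plusMap N.φ b :=
      ((map_continuous N.φ).add continuous_const).sub continuous_const
    exact (this.comp M.u_cont).mul N.u_cont
  equivariance g a := by
    calc plusMap N.φ (M.u g) * N.u g * Sc.α g (N.φ (M.φ a)) * star (plusMap N.φ (M.u g) * N.u g)
        = plusMap N.φ (M.u g) * (N.u g * Sc.α g (N.φ (M.φ a)) * star (N.u g)) *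
            plusMap N.φ (star (M.u g)) := by
          simp only [star_mul, plusMap_star, mul_assoc]
      _ = N.φ (M.φ (Sa.α g a)) := by
          rw [N.equivariance, plusMap_mul_apply, apply_mul_plusMap, ← M.equivariance]
  cocycle g h := by
    have hcomp : plusMap (N.φ.comp M.φ) (Sa.u g h) = plusMap N.φ (plusMap M.φ (Sa.u g h)) := by
      simp only [plusMap, map_sub, map_add, NonUnitalStarAlgHom.comp_apply]
      abel
    rw [hcomp, M.cocycle, plusMap_mul, plusMap_mul, plusMap_mul, plusMap_star,
      plusMap_equivariance, N.cocycle]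
    simp only [star_mul, map_mul, mul_assoc, Unitary.star_mul_cancel_left_of_mem (N.u_mem g)]

def perturb (M : CocycleMorphism Sa Sb) (w : unitary B) : CocycleMorphism Sa Sb where
  φ := (Unitary.conjStarAlgAut ℂ B w : B →⋆ₙₐ[ℂ] B).comp M.φ
  u g := w * M.u g * star (Sb.α g w)
  u_mem g := mul_mem (mul_mem w.2 (M.u_mem g)) (Unitary.star_mem (Unitary.map_mem (Sb.α g) w.2))
  u_cont := (continuous_const.mul M.u_cont).mul (Sb.α_cont w).star
  equivariance g a := by
    have hα := Unitary.map_mem (Sb.α g) w.2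
    simp only [NonUnitalStarAlgHom.comp_apply, NonUnitalStarAlgHom.coe_coe,
      Unitary.conjStarAlgAut_apply, map_mul, map_star, star_mul, star_star, mul_assoc,
      Unitary.star_mul_cancel_left_of_mem hα]
    simp only [← mul_assoc, M.equivariance]
  cocycle g h := by
    have hα := Unitary.map_mem (Sb.α g) w.2
    have hαgh := Unitary.map_mem (Sb.α (g * h)) w.2
    rw [plusMap_conj, M.cocycle]
    simp only [map_mul, map_star, star_mul, star_star, Sb.α_mul g h, mul_assoc,
      Unitary.star_mul_cancel_left_of_mem hα, Unitary.star_mul_cancel_left_of_mem hαgh,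
      Unitary.star_mul_cancel_left_of_mem (Sb.u_mem g h)]

@[simp]
lemma perturb_φ_apply (M : CocycleMorphism Sa Sb) (w : unitary B) (a : A) :
    (M.perturb w).φ a = w * M.φ a * star (w : B) := rfl

@[simp]
lemma perturb_u_apply (M : CocycleMorphism Sa Sb) (w : unitary B) (g : G) :
    (M.perturb w).u g = w * M.u g * star (Sb.α g w) := rfl

@[simp]
lemma comp_u_apply (N : CocycleMorphism Sb Sc) (M : CocycleMorphism Sa Sb) (g : G) :
    (N.comp M).u g = plusMap N.φ (M.u g) * N.u g := rfl

lemma plusMap_perturb_φ (M : CocycleMorphism Sa Sb) (w : unitary B) (x : A) :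
    plusMap (M.perturb w).φ x = w * plusMap M.φ x * star (w : B) :=
  plusMap_conj M.φ w x

lemma perturb_perturb (M : CocycleMorphism Sa Sb) (w w' : unitary B) :
    (M.perturb w).perturb w' = M.perturb (w' * w) := by
  ext <;> simp [mul_assoc]

lemma perturb_comp (N : CocycleMorphism Sb Sc) (M : CocycleMorphism Sa Sb) (x : unitary C) :
    (N.perturb x).comp M = (N.comp M).perturb x := by
  refine ext rfl (funext fun g => ?_)
  simp [plusMap_perturb_φ, mul_assoc, Unitary.star_mul_cancel_left_of_mem x.2]

lemma comp_perturb (N : CocycleMorphism Sb Sc) (M : CocycleMorphism Sa Sb) (w : unitary B) :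
    N.comp (M.perturb w) = (N.comp M).perturb (plusMapUnitary N.φ w) := by
  apply ext
  · ext a
    show N.φ (w * M.φ a * star (w : B)) = plusMap N.φ w * N.φ (M.φ a) * star (plusMap N.φ w)
    rw [← plusMap_star, plusMap_mul_apply, apply_mul_plusMap]
  · funext g
    simp only [comp_u_apply, perturb_u_apply, plusMapUnitary, plusMap_mul, plusMap_star,
      plusMap_equivariance, star_mul, star_star, mul_assoc,
      Unitary.star_mul_self_of_mem (N.u_mem g), mul_one]

def CloseOn (M N : CocycleMorphism Sa Sb) (S : Set A) (K : Set G) (ε : ℝ) : Prop :=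
  (∀ a ∈ S, ‖M.φ a - N.φ a‖ ≤ ε) ∧ ∀ g ∈ K, ‖M.u g - N.u g‖ ≤ ε

lemma CloseOn.mono {M N : CocycleMorphism Sa Sb} {S S' : Set A} {K K' : Set G} {ε ε' : ℝ}
    (h : M.CloseOn N S K ε) (hS : S' ⊆ S) (hK : K' ⊆ K) (hε : ε ≤ ε') : M.CloseOn N S' K' ε' :=
  ⟨fun a ha => (h.1 a (hS ha)).trans hε, fun g hg => (h.2 g (hK hg)).trans hε⟩

lemma approxUDom_iff (M N : CocycleMorphism Sa Sb) :
    ApproxUDom Sb M.φ M.u N.φ N.u ↔ ∀ ε > 0, ∀ F : Finset A, ∀ K : Set G, IsCompact K →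
      ∃ w : unitary B, M.CloseOn (N.perturb w) F K ε :=
  forall₂_congr fun _ _ => forall₃_congr fun _ _ _ =>
    ⟨fun ⟨w, hw, h⟩ => ⟨⟨w, hw⟩, h⟩, fun ⟨w, h⟩ => ⟨w, w.2, h⟩⟩

lemma approxUDom_perturb {M N : CocycleMorphism Sa Sb} (h : ApproxUDom Sb M.φ M.u N.φ N.u)
    (c : unitary B) : ApproxUDom Sb M.φ M.u (N.perturb c).φ (N.perturb c).u := by
  rw [approxUDom_iff] at h ⊢
  intro ε hε F K hK
  obtain ⟨w, hw⟩ := h ε hε F K hK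
  exact ⟨w * star c, by rwa [perturb_perturb, mul_assoc, Unitary.star_mul_self, mul_one]⟩

/-- Since all maps involved are contractive, a finite `ε / 3`-net of `S` suffices. -/
lemma exists_perturb_closeOn_of_isCompact {M N : CocycleMorphism Sa Sb}
    (h : ApproxUDom Sb M.φ M.u N.φ N.u) {S : Set A} (hS : IsCompact S) {K : Set G}
    (hK : IsCompact K) {ε : ℝ} (hε : 0 < ε) : ∃ w : unitary B, M.CloseOn (N.perturb w) S K ε := by
  obtain ⟨F, -, hF, hSF⟩ := finite_cover_balls_of_compact hS (by positivity : 0 < ε / 3)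
  obtain ⟨w, hφ, hu⟩ := (approxUDom_iff M N).1 h (ε / 3) (by positivity) hF.toFinset K hK
  refine ⟨w, fun a ha => ?_, fun g hg => (hu g hg).trans (by linarith)⟩
  obtain ⟨b, hb, hab⟩ := mem_iUnion₂.1 (hSF ha)
  rw [Metric.mem_ball, dist_eq_norm] at hab
  calc ‖M.φ a - (N.perturb w).φ a‖
      ≤ ‖M.φ a - M.φ b‖ + (‖M.φ b - (N.perturb w).φ b‖ + ‖(N.perturb w).φ b - (N.perturb w).φ a‖) :=
        (norm_sub_le_norm_sub_add_norm_sub _ _ _).trans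
          (add_le_add_right (norm_sub_le_norm_sub_add_norm_sub _ _ _) _)
    _ ≤ ε / 3 + (ε / 3 + ε / 3) := by
        gcongr
        · exact (M.φ.norm_apply_sub_apply_le a b).trans hab.le
        · exact hφ b (hF.mem_toFinset.2 hb)
        · exact ((N.perturb w).φ.norm_apply_sub_apply_le b a).trans (norm_sub_rev a b ▸ hab.le)
    _ = ε := by ring

lemma exists_perturb_comp_closeOn {M : CocycleMorphism Sa Sb} {N : CocycleMorphism Sb Sa}
    (h : ApproxUDom Sa (CocycleMorphism.id Sa).φ (CocycleMorphism.id Sa).u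
      (N.comp M).φ (N.comp M).u)
    (w : unitary B) {S : Set A} (hS : IsCompact S) {K : Set G} (hK : IsCompact K) {ε : ℝ}
    (hε : 0 < ε) :
    ∃ x : unitary A, (CocycleMorphism.id Sa).CloseOn ((N.perturb x).comp (M.perturb w)) S K ε := by
  have h' := approxUDom_perturb h (plusMapUnitary N.φ w)
  rw [← comp_perturb] at h'
  simpa only [perturb_comp] using exists_perturb_closeOn_of_isCompact h' hS hK hε

/-- `M' ≈ M' ∘ N ∘ M ≈ M`. On cocycles the middle step compares `M'⁺ (N⁺ (M.u g)*)` with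
`(M.u g)*`, which is why `T` has to contain `1` and these adjoints. -/
lemma closeOn_of_closeOn_id_comp {M M' : CocycleMorphism Sa Sb} {N : CocycleMorphism Sb Sa}
    {S : Set A} {T : Set B} {K : Set G} {ε₁ ε₂ : ℝ}
    (h₁ : (CocycleMorphism.id Sa).CloseOn (N.comp M) S K ε₁)
    (h₂ : (CocycleMorphism.id Sb).CloseOn (M'.comp N) T K ε₂)
    (hST : M.φ '' S ⊆ T) (hT : 1 ∈ T) (hKT : (fun g => star (M.u g)) '' K ⊆ T) :
    M'.CloseOn M S K (ε₁ + 3 * ε₂) := by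
  have hε₂ : 0 ≤ ε₂ := (norm_nonneg _).trans (h₂.1 1 hT)
  refine ⟨fun a ha => ?_, fun g hg => ?_⟩
  · calc ‖M'.φ a - M.φ a‖ ≤ ‖M'.φ a - M'.φ (N.φ (M.φ a))‖ + ‖M'.φ (N.φ (M.φ a)) - M.φ a‖ :=
          norm_sub_le_norm_sub_add_norm_sub _ _ _
      _ ≤ ε₁ + ε₂ := by
          gcongr
          · exact (NonUnitalStarAlgHom.norm_apply_sub_apply_le _ _ _).trans (h₁.1 a ha)
          · rw [norm_sub_rev]; exact h₂.1 _ (hST (mem_image_of_mem _ ha))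
      _ ≤ ε₁ + 3 * ε₂ := by linarith
  · set y := star (M.u g)
    have e₁ : ‖M'.u g - star (plusMap M'.φ (N.u g))‖ ≤ ε₂ := by
      rw [norm_sub_star_eq_norm_one_sub_mul (plusMap_mem_unitary _ (N.u_mem g))]
      exact h₂.2 g hg
    have e₂ : ‖plusMap M'.φ (N.u g) - plusMap M'.φ (plusMap N.φ y)‖ ≤ ε₁ := by
      refine (norm_plusMap_sub_plusMap_le M'.φ _ _).trans ?_
      rw [plusMap_star, norm_sub_star_eq_norm_one_sub_mul (plusMap_mem_unitary _ (M.u_mem g))]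
      exact h₁.2 g hg
    have e₃ : ‖plusMap M'.φ (plusMap N.φ y) - y‖ ≤ 2 * ε₂ := by
      rw [plusMap_plusMap_sub]
      exact (norm_sub_le _ _).trans <| (two_mul ε₂).symm ▸
        add_le_add (h₂.1 1 hT) (h₂.1 y (hKT (mem_image_of_mem _ hg)))
    calc ‖M'.u g - M.u g‖
        ≤ ‖M'.u g - star (plusMap M'.φ (N.u g))‖ + ‖plusMap M'.φ (N.u g) - y‖ := by
          rw [← norm_star (plusMap M'.φ (N.u g) - y), star_sub, star_star]
          exact norm_sub_le_norm_sub_add_norm_sub _ _ _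
      _ ≤ ε₂ + (ε₁ + 2 * ε₂) := by
          gcongr
          exact (norm_sub_le_norm_sub_add_norm_sub _ _ _).trans (add_le_add e₂ e₃)
      _ = ε₁ + 3 * ε₂ := by ring

section Limits

variable {ι : Type*} {l : Filter ι}

def ofTendsto [l.NeBot] (M : ι → CocycleMorphism Sa Sb) (Φ : A → B) (U : G → B)
    (hΦ : ∀ a, Tendsto (fun i => (M i).φ a) l (𝓝 (Φ a)))
    (hU : ∀ g, Tendsto (fun i => (M i).u g) l (𝓝 (U g))) (hUc : Continuous U) :
    CocycleMorphism Sa Sb where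
  φ :=
    { toFun := Φ
      map_smul' c a :=
        tendsto_nhds_unique (hΦ (c • a))
          (by simpa only [map_smul, MonoidHom.id_apply] using (hΦ a).const_smul c)
      map_zero' := tendsto_nhds_unique (hΦ 0) (by simpa only [map_zero] using tendsto_const_nhds)
      map_add' a b :=
        tendsto_nhds_unique (hΦ (a + b)) (by simpa only [map_add] using (hΦ a).add (hΦ b))
      map_mul' a b :=
        tendsto_nhds_unique (hΦ (a * b)) (by simpa only [map_mul] using (hΦ a).mul (hΦ b))
      map_star' a :=
        tendsto_nhds_unique (hΦ (star a)) (by simpa only [map_star] using (hΦ a).star) }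
  u := U
  u_mem g := isClosed_unitary.mem_of_tendsto (hU g) (Eventually.of_forall fun i => (M i).u_mem g)
  u_cont := hUc
  equivariance g a := by
    refine tendsto_nhds_unique ?_ (hΦ (Sa.α g a))
    simp only [← (M _).equivariance]
    exact ((hU g).mul (((map_continuous (Sb.α g)).tendsto _).comp (hΦ a))).mul (hU g).star
  cocycle g h := by
    refine tendsto_nhds_unique (((hΦ (Sa.u g h)).add_const 1).sub (hΦ 1)) ?_
    have e : ∀ i, (M i).φ (Sa.u g h) + 1 - (M i).φ 1
        = (M i).u g * Sb.α g ((M i).u h) * Sb.u g h * star ((M i).u (g * h)) :=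
      fun i => (M i).cocycle g h
    simp only [e]
    exact (((hU g).mul (((map_continuous (Sb.α g)).tendsto _).comp (hU h))).mul
      tendsto_const_nhds).mul (hU (g * h)).star

def ConvergesTo (M : ι → CocycleMorphism Sa Sb) (l : Filter ι) (L : CocycleMorphism Sa Sb) :
    Prop :=
  ∀ ε > 0, ∀ F : Finset A, ∀ K : Set G, IsCompact K → ∀ᶠ i in l, L.CloseOn (M i) F K ε

lemma ConvergesTo.tendsto_φ {M : ι → CocycleMorphism Sa Sb} {L : CocycleMorphism Sa Sb}
    (h : ConvergesTo M l L) (a : A) : Tendsto (fun i => (M i).φ a) l (𝓝 (L.φ a)) := by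
  refine Metric.tendsto_nhds.2 fun ε hε => ?_
  filter_upwards [h (ε / 2) (half_pos hε) {a} ∅ isCompact_empty] with i hi
  rw [dist_eq_norm, norm_sub_rev]
  exact (hi.1 a (by simp)).trans_lt (half_lt_self hε)

lemma ConvergesTo.tendsto_u {M : ι → CocycleMorphism Sa Sb} {L : CocycleMorphism Sa Sb}
    (h : ConvergesTo M l L) (g : G) : Tendsto (fun i => (M i).u g) l (𝓝 (L.u g)) := by
  refine Metric.tendsto_nhds.2 fun ε hε => ?_
  filter_upwards [h (ε / 2) (half_pos hε) ∅ {g} isCompact_singleton] with i hi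
  rw [dist_eq_norm, norm_sub_rev]
  exact (hi.2 g rfl).trans_lt (half_lt_self hε)

lemma ConvergesTo.comp_tendsto {ι' : Type*} {l' : Filter ι'} {f : ι' → ι}
    {M : ι → CocycleMorphism Sa Sb} {L : CocycleMorphism Sa Sb} (h : ConvergesTo M l L)
    (hf : Tendsto f l' l) : ConvergesTo (M ∘ f) l' L :=
  fun ε hε F K hK => hf.eventually (h ε hε F K hK)

lemma approxUDom_of_convergesTo [l.NeBot] {N L : CocycleMorphism Sa Sb} {w : ι → unitary B}
    (h : ConvergesTo (fun i => N.perturb (w i)) l L) : ApproxUDom Sb L.φ L.u N.φ N.u :=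
  (approxUDom_iff L N).2 fun ε hε F K hK =>
    let ⟨i, hi⟩ := (h ε hε F K hK).exists
    ⟨w i, hi⟩

end Limits

theorem exists_convergesTo_of_closeOn_succ (M : ℕ → CocycleMorphism Sa Sb) {s : ℕ → A}
    (hs : DenseRange s) (K : CompactExhaustion G) {C : ℝ}
    (hM : ∀ n, (M (n + 1)).CloseOn (M n) (s '' Iic n) (K n) (C / 2 ^ n)) :
    ∃ L, ConvergesTo M atTop L := by
  have hφ : ∀ a, CauchySeq fun n => (M n).φ a :=
    cauchySeq_apply_of_denseRange hs fun i =>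
      cauchySeq_of_le_geometric_two_of_ge (m := i) fun n hn => by
        rw [dist_eq_norm, norm_sub_rev]
        exact (hM n).1 _ (mem_image_of_mem s hn)
  choose Φ hΦ using fun a => cauchySeq_tendsto_of_complete (hφ a)
  obtain ⟨U, hunif⟩ := K.exists_tendstoUniformlyOn_of_dist_succ_le (f := fun n => (M n).u)
    fun n g hg => by
      rw [dist_eq_norm, norm_sub_rev]
      exact (hM n).2 g hg
  have hU : ∀ g, Tendsto (fun n => (M n).u g) atTop (𝓝 (U g)) := fun g =>
    let ⟨m, hm⟩ := K.exists_mem g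
    (hunif m).tendsto_at hm
  have hUc : Continuous U :=
    (tendstoLocallyUniformly_of_forall_exists_nhds fun g =>
      let ⟨m, hm⟩ := K.exists_mem_nhds g
      ⟨_, hm, hunif m⟩).continuous (Frequently.of_forall fun n => (M n).u_cont)
  refine ⟨ofTendsto M Φ U hΦ hU hUc, fun ε hε F K' hK' => ?_⟩
  obtain ⟨m, hm⟩ := K.exists_superset_of_isCompact hK'
  have hF : ∀ᶠ n in atTop, ∀ a ∈ F, dist ((M n).φ a) (Φ a) < ε :=
    (eventually_all_finset F).2 fun a _ => Metric.tendsto_nhds.1 (hΦ a) ε hε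
  filter_upwards [hF, Metric.tendstoUniformlyOn_iff.1 (hunif m) ε hε] with n hnF hnK
  refine ⟨fun a ha => ?_, fun g hg => ?_⟩
  · rw [← dist_eq_norm, dist_comm]
    exact (hnF a ha).le
  · rw [← dist_eq_norm]
    exact (hnK g (hm hg)).le

lemma apply_apply_of_comp_eq_id {M : CocycleMorphism Sa Sb} {N : CocycleMorphism Sb Sa}
    (h : N.comp M = CocycleMorphism.id Sa) (a : A) : N.φ (M.φ a) = a :=
  congrArg (fun L : CocycleMorphism Sa Sa => L.φ a) h

theorem comp_eq_id_of_convergesTo {M : ℕ → CocycleMorphism Sa Sb} {N : ℕ → CocycleMorphism Sb Sa}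
    {L : CocycleMorphism Sa Sb} {L' : CocycleMorphism Sb Sa} (hM : ConvergesTo M atTop L)
    (hN : ConvergesTo N atTop L') {s : ℕ → A} (hs : DenseRange s) (K : CompactExhaustion G)
    {ε : ℕ → ℝ} (hε : Tendsto ε atTop (𝓝 0))
    (h : ∀ n, (CocycleMorphism.id Sa).CloseOn ((N n).comp (M n)) (s '' Iic n) (K n) (ε n)) :
    L'.comp L = CocycleMorphism.id Sa := by
  apply ext
  · refine DFunLike.coe_injective (hs.equalizer (map_continuous _) (map_continuous _) ?_)
    funext i
    refine (eq_of_tendsto_of_norm_sub_le (tendsto_apply_apply (hN.tendsto_φ _) (hM.tendsto_φ _))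
      hε (eventually_atTop.2 ⟨i, fun n hn => (h n).1 _ (mem_image_of_mem s hn)⟩)).symm
  · funext g
    obtain ⟨m, hm⟩ := K.exists_mem g
    refine (eq_of_tendsto_of_norm_sub_le ?_ hε
      (eventually_atTop.2 ⟨m, fun n hn => (h n).2 g (K.subset hn hm)⟩)).symm
    exact ((((tendsto_apply_apply (hN.tendsto_φ _) (hM.tendsto_u g)).add_const 1).sub
      (hN.tendsto_φ 1)).mul (hN.tendsto_u g))

lemma u_eq_star_of_comp_eq_id {M : CocycleMorphism Sa Sb} {N : CocycleMorphism Sb Sa}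
    (h : N.comp M = CocycleMorphism.id Sa) (g : G) : N.u g = star (N.φ (M.u g)) := by
  have hN1 : N.φ 1 = 1 := by
    calc N.φ 1 = N.φ 1 * N.φ (M.φ 1) := by rw [apply_apply_of_comp_eq_id h, mul_one]
      _ = 1 := by rw [← map_mul, one_mul, apply_apply_of_comp_eq_id h]
  have hv : N.φ (M.u g) ∈ unitary A :=
    plusMap_of_map_one _ hN1 (M.u g) ▸ plusMap_mem_unitary _ (M.u_mem g)
  have hu : N.φ (M.u g) * N.u g = 1 := by
    rw [← plusMap_of_map_one _ hN1]
    exact congrArg (fun L : CocycleMorphism Sa Sa => L.u g) h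
  rw [← Unitary.star_mul_cancel_left_of_mem hv (N.u g), hu, mul_one]

end CocycleMorphism

section Intertwining

open CocycleMorphism

variable {G A B : Type*} [Group G] [TopologicalSpace G] [CStarAlgebra A] [CStarAlgebra B]
  {Sα : TwistedAction G A} {Sβ : TwistedAction G B}

def stepSet (s : ℕ → A) (t : ℕ → B) (N : CocycleMorphism Sβ Sα) (K : Set G) (n : ℕ) : Set A :=
  insert 1 (s '' Iic n ∪ N.φ '' (t '' Iic n) ∪ (fun g => star (N.u g)) '' K)

variable {s : ℕ → A} {t : ℕ → B} {N : CocycleMorphism Sβ Sα} {K K' : Set G} {n n' : ℕ}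

lemma isCompact_stepSet (hK : IsCompact K) : IsCompact (stepSet s t N K n) :=
  ((((finite_Iic n).image s).isCompact.union
    (((finite_Iic n).image t).image N.φ).isCompact).union (hK.image N.u_cont.star)).insert 1

lemma stepSet_mono (hK : K ⊆ K') (hn : n ≤ n') : stepSet s t N K n ⊆ stepSet s t N K' n' :=
  insert_subset_insert <| union_subset_union (union_subset_union
    (image_mono (Iic_subset_Iic.2 hn)) (image_mono (image_mono (Iic_subset_Iic.2 hn))))
    (image_mono hK)

lemma one_mem_stepSet : 1 ∈ stepSet s t N K n := mem_insert _ _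

lemma image_subset_stepSet : s '' Iic n ⊆ stepSet s t N K n :=
  subset_union_left.trans (subset_union_left.trans (subset_insert _ _))

lemma image_image_subset_stepSet : N.φ '' (t '' Iic n) ⊆ stepSet s t N K n :=
  subset_union_right.trans (subset_union_left.trans (subset_insert _ _))

lemma star_image_subset_stepSet : (fun g => star (N.u g)) '' K ⊆ stepSet s t N K n :=
  subset_union_right.trans (subset_insert _ _)

theorem exists_intertwining {P : CocycleMorphism Sα Sβ} {Q : CocycleMorphism Sβ Sα}
    (hA : ApproxUDom Sα (CocycleMorphism.id Sα).φ (CocycleMorphism.id Sα).u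
      (Q.comp P).φ (Q.comp P).u)
    (hB : ApproxUDom Sβ (CocycleMorphism.id Sβ).φ (CocycleMorphism.id Sβ).u
      (P.comp Q).φ (P.comp Q).u)
    (s : ℕ → A) (t : ℕ → B) (K : CompactExhaustion G) :
    ∃ (W : ℕ → unitary B) (X : ℕ → unitary A), ∀ n,
      (CocycleMorphism.id Sα).CloseOn ((Q.perturb (X (n + 1))).comp (P.perturb (W n)))
        (stepSet s t (Q.perturb (X n)) (K n) n) (K n) (1 / 2 ^ n) ∧
      (CocycleMorphism.id Sβ).CloseOn ((P.perturb (W (n + 1))).comp (Q.perturb (X (n + 1))))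
        (stepSet t s (P.perturb (W n)) (K n) n) (K n) (1 / 2 ^ n) := by
  have step : ∀ n (p : unitary B × unitary A), ∃ q : unitary B × unitary A,
      (CocycleMorphism.id Sα).CloseOn ((Q.perturb q.2).comp (P.perturb p.1))
        (stepSet s t (Q.perturb p.2) (K n) n) (K n) (1 / 2 ^ n) ∧
      (CocycleMorphism.id Sβ).CloseOn ((P.perturb q.1).comp (Q.perturb q.2))
        (stepSet t s (P.perturb p.1) (K n) n) (K n) (1 / 2 ^ n) := fun n p => by
    have hε : (0 : ℝ) < 1 / 2 ^ n := by positivity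
    obtain ⟨X, hX⟩ := exists_perturb_comp_closeOn hA p.1
      (isCompact_stepSet (s := s) (t := t) (N := Q.perturb p.2) (K.isCompact n)) (K.isCompact n) hε
    obtain ⟨W, hW⟩ := exists_perturb_comp_closeOn hB X
      (isCompact_stepSet (s := t) (t := s) (N := P.perturb p.1) (K.isCompact n)) (K.isCompact n) hε
    exact ⟨(W, X), hX, hW⟩
  obtain ⟨f, hf⟩ := exists_seq_forall_rel_succ (1, 1) step
  exact ⟨fun n => (f n).1, fun n => (f n).2, hf⟩

theorem exists_comp_eq_id_of_approxUDom [TopologicalSpace.SeparableSpace A]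
    [TopologicalSpace.SeparableSpace B] [WeaklyLocallyCompactSpace G] [SigmaCompactSpace G]
    {P : CocycleMorphism Sα Sβ} {Q : CocycleMorphism Sβ Sα}
    (hA : ApproxUDom Sα (CocycleMorphism.id Sα).φ (CocycleMorphism.id Sα).u
      (Q.comp P).φ (Q.comp P).u)
    (hB : ApproxUDom Sβ (CocycleMorphism.id Sβ).φ (CocycleMorphism.id Sβ).u
      (P.comp Q).φ (P.comp Q).u) :
    ∃ (Φ : CocycleMorphism Sα Sβ) (Ψ : CocycleMorphism Sβ Sα),
      Ψ.comp Φ = CocycleMorphism.id Sα ∧ Φ.comp Ψ = CocycleMorphism.id Sβ ∧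
      ApproxUDom Sβ Φ.φ Φ.u P.φ P.u ∧ ApproxUDom Sα Ψ.φ Ψ.u Q.φ Q.u := by
  obtain ⟨s, hs⟩ := TopologicalSpace.exists_dense_seq A
  obtain ⟨t, ht⟩ := TopologicalSpace.exists_dense_seq B
  let K := CompactExhaustion.choice G
  obtain ⟨W, X, h⟩ := exists_intertwining hA hB s t K
  have hP : ∀ n, (P.perturb (W (n + 1))).CloseOn (P.perturb (W n)) (s '' Iic n) (K n)
      (4 / 2 ^ n) := fun n =>
    (closeOn_of_closeOn_id_comp ((h n).1.mono image_subset_stepSet subset_rfl le_rfl) (h n).2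
      image_image_subset_stepSet one_mem_stepSet star_image_subset_stepSet).mono
      subset_rfl subset_rfl (le_of_eq (by ring))
  have hQ : ∀ n, (Q.perturb (X (n + 2))).CloseOn (Q.perturb (X (n + 1))) (t '' Iic n) (K n)
      (4 / 2 ^ n) := fun n =>
    have hmono := stepSet_mono (s := s) (t := t) (N := Q.perturb (X (n + 1)))
      (K.subset n.le_succ) n.le_succ
    (closeOn_of_closeOn_id_comp ((h n).2.mono image_subset_stepSet subset_rfl le_rfl)
      ((h (n + 1)).1.mono subset_rfl (K.subset n.le_succ) le_rfl)
      (image_image_subset_stepSet.trans hmono) one_mem_stepSet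
      (star_image_subset_stepSet.trans hmono)).mono subset_rfl subset_rfl
      (by rw [pow_succ]; field_simp; norm_num)
  obtain ⟨Φ, hΦ⟩ := exists_convergesTo_of_closeOn_succ (fun n => P.perturb (W n)) hs K hP
  obtain ⟨Ψ, hΨ⟩ := exists_convergesTo_of_closeOn_succ (fun n => Q.perturb (X (n + 1))) ht K hQ
  have hε : Tendsto (fun n : ℕ => 1 / 2 ^ n) atTop (𝓝 (0 : ℝ)) :=
    tendsto_const_nhds.div_atTop (tendsto_pow_atTop_atTop_of_one_lt one_lt_two)
  exact ⟨Φ, Ψ,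
    comp_eq_id_of_convergesTo hΦ hΨ hs K hε fun n =>
      (h n).1.mono image_subset_stepSet subset_rfl le_rfl,
    comp_eq_id_of_convergesTo hΨ (hΦ.comp_tendsto (tendsto_add_atTop_nat 1)) ht K hε fun n =>
      (h n).2.mono image_subset_stepSet subset_rfl le_rfl,
    approxUDom_of_convergesTo hΦ, approxUDom_of_convergesTo hΨ⟩

end Intertwining

end

open CocycleMorphism in
theorem exists_mutuallyInverse_cocycleConjugacies_of_approxUDom_general
    {G A B : Type*} [Group G] [TopologicalSpace G]
    [LocallyCompactSpace G] [SecondCountableTopology G]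
    [CStarAlgebra A] [CStarAlgebra B]
    [TopologicalSpace.SeparableSpace A] [TopologicalSpace.SeparableSpace B]
    (Sα : TwistedAction G A) (Sβ : TwistedAction G B)
    (P : CocycleMorphism Sα Sβ) (Q : CocycleMorphism Sβ Sα)
    (hA : ApproxUDom Sα (fun a => a) (fun _ => 1)
      (fun a => Q.φ (P.φ a)) (fun g => plusMap Q.φ (P.u g) * Q.u g))
    (hB : ApproxUDom Sβ (fun b => b) (fun _ => 1)
      (fun b => P.φ (Q.φ b)) (fun g => plusMap P.φ (Q.u g) * P.u g)) :
    ∃ (Φ : CocycleMorphism Sα Sβ) (Ψ : CocycleMorphism Sβ Sα),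
      Function.Bijective Φ.φ ∧ Function.Bijective Ψ.φ ∧
      (∀ a : A, Ψ.φ (Φ.φ a) = a) ∧ (∀ b : B, Φ.φ (Ψ.φ b) = b) ∧
      (∀ g : G, Ψ.u g = star (Ψ.φ (Φ.u g))) ∧
      ApproxUDom Sβ Φ.φ Φ.u P.φ P.u ∧
      ApproxUDom Sα Ψ.φ Ψ.u Q.φ Q.u := by
  obtain ⟨Φ, Ψ, hΨΦ, hΦΨ, hΦ, hΨ⟩ := exists_comp_eq_id_of_approxUDom hA hB
  have hleft : Function.LeftInverse Ψ.φ Φ.φ := apply_apply_of_comp_eq_id hΨΦ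
  have hright : Function.LeftInverse Φ.φ Ψ.φ := apply_apply_of_comp_eq_id hΦΨ
  exact ⟨Φ, Ψ, ⟨hleft.injective, hright.surjective⟩, ⟨hright.injective, hleft.surjective⟩,
    hleft, hright, u_eq_star_of_comp_eq_id hΨΦ, hΦ, hΨ⟩

/-- (Two-sided approximate intertwining.) If `(φ,u)` and `(ψ,v)` are cocycle
morphisms between twisted actions on separable unital C*-algebras such that
`(id_A,1) ⪅ᵤ (ψ,v)∘(φ,u)` and `(id_B,1) ⪅ᵤ (φ,u)∘(ψ,v)`, then there exist mutually inverse
cocycle conjugacies `(Φ,U)` and `(Ψ,V)` with `(Φ,U) ⪅ᵤ (φ,u)` and `(Ψ,V) ⪅ᵤ (ψ,v)`. -/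
theorem exists_mutuallyInverse_cocycleConjugacies_of_approxUDom
    {G A B : Type*} [Group G] [TopologicalSpace G] [IsTopologicalGroup G]
    [LocallyCompactSpace G] [SecondCountableTopology G] [T2Space G]
    [CStarAlgebra A] [CStarAlgebra B]
    [TopologicalSpace.SeparableSpace A] [TopologicalSpace.SeparableSpace B]
    (Sα : TwistedAction G A) (Sβ : TwistedAction G B)
    (P : CocycleMorphism Sα Sβ) (Q : CocycleMorphism Sβ Sα)
    (hA : ApproxUDom Sα (fun a => a) (fun _ => 1)
      (fun a => Q.φ (P.φ a)) (fun g => plusMap Q.φ (P.u g) * Q.u g))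
    (hB : ApproxUDom Sβ (fun b => b) (fun _ => 1)
      (fun b => P.φ (Q.φ b)) (fun g => plusMap P.φ (Q.u g) * P.u g)) :
    ∃ (Φ : CocycleMorphism Sα Sβ) (Ψ : CocycleMorphism Sβ Sα),
      Function.Bijective Φ.φ ∧ Function.Bijective Ψ.φ ∧
      (∀ a : A, Ψ.φ (Φ.φ a) = a) ∧ (∀ b : B, Φ.φ (Ψ.φ b) = b) ∧
      (∀ g : G, Ψ.u g = star (Ψ.φ (Φ.u g))) ∧
      ApproxUDom Sβ Φ.φ Φ.u P.φ P.u ∧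
      ApproxUDom Sα Ψ.φ Ψ.u Q.φ Q.u :=
  exists_mutuallyInverse_cocycleConjugacies_of_approxUDom_general Sα Sβ P Q hA hB
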